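/- Let $f(y_0) = (y_0(y_0-1)(y_0-x))^{-1/2}$ and $L_n = f^{(n)}/f$ (derivatives in $y_0$). Then for every $n \ge 1$: $\frac{1}{f}\,\partial_{y_0}^n\!\left(\frac{f}{x-y_0}\right) = \frac{L_n}{x-y_0} - 2\,\partial_x L_n$, where $\partial_x L_n$ is the derivative of $L_n$ (viewed as a function of $x$ and $y_0$ via $\Sigma_k$) with $y_0$ held fixed. -/

import Mathlib

open Finset

/-- `Σ_k = (-y)^{-k} + (1-y)^{-k} + (x-y)^{-k}`. -/
noncomputable def Sig (x y : ℂ) (k : ℕ) : ℂ :=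
  ((-y) ^ k)⁻¹ + ((1 - y) ^ k)⁻¹ + ((x - y) ^ k)⁻¹

/-- The Bell-type polynomial
`L_n = ∑_{p_1+2p_2+⋯+np_n=n} n! Σ_1^{p_1}⋯Σ_n^{p_n} / (2^{∑ p_k} ∏ p_k! ∏ k^{p_k})`,
the sum running over all nonnegative multi-indices `(p_1,…,p_n)` with
`p_1 + 2p_2 + ⋯ + n p_n = n` (encoded as `p : Fin n → ℕ`). -/
noncomputable def Lsum (x y : ℂ) (n : ℕ) : ℂ :=
  ∑ p ∈ (Fintype.piFinset fun _ : Fin n => Finset.range (n + 1)).filter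
      (fun p => ∑ i : Fin n, (i.1 + 1) * p i = n),
    (n.factorial : ℂ) * (∏ i : Fin n, Sig x y (i.1 + 1) ^ p i) /
      (2 ^ (∑ i : Fin n, p i) * (∏ i : Fin n, ((p i).factorial : ℂ)) *
        ∏ i : Fin n, ((i.1 : ℂ) + 1) ^ p i)

/-!
With `a_i = Σ_{i+1} / (2 (i + 1))`, `L_w = w! P_w` where `P_w` is the coefficient of `t ^ w` in
`exp (∑ i, a_i t ^ (i + 1))`. Two identities for these coefficients, `∂P_w/∂a_j = P_{w-j-1}` and
Euler's `w P_w = ∑ j, (j + 1) a_j P_{w-j-1}`, turn `f' = a_0 f` and `∂_y a_i = (i + 2) a_{i+1}`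
into `f⁽ᵏ⁾ = f L_k`. With `T = (x - y₀)⁻¹`, Leibniz's rule gives
`(1/f) ∂ⁿ (f / (x - y₀)) = ∑_{k ≤ n} n!/k! L_k T^(n-k+1)`. On the other side `∂_x a_j = -T^(j+2)/2`,
so `-2 ∂_x L_n = ∑_{k < n} n!/k! L_k T^(n-k+1)`, and `L_n T` is the remaining term `k = n`.
-/

open Nat Topology

section ExpCoeff

variable {K : Type*} [Field K] {N : ℕ}

def weight (p : Fin N → ℕ) : ℕ := ∑ i, (i.1 + 1) * p i

def weightedIndices (N w : ℕ) : Finset (Fin N → ℕ) :=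
  (Fintype.piFinset fun _ : Fin N => range (w + 1)).filter (fun p => weight p = w)

lemma mul_le_weight (p : Fin N → ℕ) (i : Fin N) : (i.1 + 1) * p i ≤ weight p :=
  single_le_sum (f := fun i : Fin N => (i.1 + 1) * p i) (fun _ _ => Nat.zero_le _) (mem_univ i)

lemma mem_weightedIndices {w : ℕ} {p : Fin N → ℕ} : p ∈ weightedIndices N w ↔ weight p = w := by
  refine ⟨fun h => (mem_filter.1 h).2,
    fun h => mem_filter.2 ⟨Fintype.mem_piFinset.2 fun i => ?_, h⟩⟩
  have := mul_le_weight p i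
  rw [mem_range]
  nlinarith

lemma weight_add_single (p : Fin N → ℕ) (j : Fin N) :
    weight (p + Pi.single j 1) = weight p + (j.1 + 1) := by
  simp [weight, mul_add, sum_add_distrib, Pi.single_apply]

def expTerm (a : ℕ → K) (p : Fin N → ℕ) : K := ∏ i : Fin N, a i ^ p i / (p i)!

-- `expCoeff N w a` is the coefficient of `t ^ w` in `exp (∑ i < N, a i * t ^ (i + 1))`.
def expCoeff (N w : ℕ) (a : ℕ → K) : K := ∑ p ∈ weightedIndices N w, expTerm a p

def partialExpTerm (a : ℕ → K) (p : Fin N → ℕ) (j : Fin N) : K :=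
  (∏ i ∈ univ.erase j, a (i : Fin N) ^ p i / (p i)!) * (p j * a j ^ (p j - 1) / (p j)!)

lemma partialExpTerm_add_single [CharZero K] (a : ℕ → K) (p : Fin N → ℕ) (j : Fin N) :
    partialExpTerm a (p + Pi.single j 1) j = expTerm a p := by
  have hoff : ∀ i ∈ univ.erase j, (p + Pi.single j 1 : Fin N → ℕ) i = p i := fun i hi => by
    simp [ne_of_mem_erase hi]
  rw [partialExpTerm, prod_congr rfl fun i hi => by rw [hoff i hi], expTerm,
    ← mul_prod_erase univ _ (mem_univ j), mul_comm]
  congr 1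
  simp only [Pi.add_apply, Pi.single_eq_same, Nat.add_sub_cancel, factorial_succ]
  push_cast
  field_simp

lemma mul_partialExpTerm (a : ℕ → K) (p : Fin N → ℕ) (j : Fin N) :
    a j * partialExpTerm a p j = p j * expTerm a p := by
  rw [partialExpTerm, expTerm, ← mul_prod_erase univ _ (mem_univ j)]
  rcases Nat.eq_zero_or_eq_succ_pred (p j) with h | h
  · simp [h]
  · rw [h, pow_succ]
    simp only [Nat.pred_eq_sub_one, Nat.succ_sub_one]
    ring

lemma sub_single_add_single {p : Fin N → ℕ} {j : Fin N} (h : p j ≠ 0) :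
    p - Pi.single j 1 + Pi.single j 1 = p := by
  funext i
  by_cases hi : i = j
  · subst hi
    simp only [Pi.add_apply, Pi.sub_apply, Pi.single_eq_same]
    omega
  · simp [hi]

lemma apply_eq_zero_of_weight_lt {p : Fin N → ℕ} {j : Fin N} (h : weight p < j.1 + 1) :
    p j = 0 := by
  have := mul_le_weight p j
  by_contra hpj
  nlinarith [Nat.pos_of_ne_zero hpj]

lemma sum_partialExpTerm_add [CharZero K] (a : ℕ → K) (w : ℕ) (j : Fin N) :
    ∑ p ∈ weightedIndices N (w + (j.1 + 1)), partialExpTerm a p j = expCoeff N w a := by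
  rw [expCoeff,
    ← sum_filter_of_ne (p := fun p => p j ≠ 0) fun p _ h hp => h (by simp [partialExpTerm, hp])]
  refine sum_nbij' (· - Pi.single j 1) (· + Pi.single j 1) ?_ ?_ ?_ ?_ ?_
  · intro p hp
    obtain ⟨hp, hpj⟩ := mem_filter.1 hp
    have hw := mem_weightedIndices.1 hp
    rw [← sub_single_add_single hpj, weight_add_single] at hw
    exact mem_weightedIndices.2 (by omega)
  · intro q hq
    refine mem_filter.2 ⟨mem_weightedIndices.2 ?_, by simp⟩
    rw [weight_add_single, mem_weightedIndices.1 hq]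
  · intro p hp
    exact sub_single_add_single (mem_filter.1 hp).2
  · intro q _
    exact add_tsub_cancel_right q _
  · intro p hp
    conv_lhs => rw [← sub_single_add_single (mem_filter.1 hp).2]
    exact partialExpTerm_add_single a _ j

lemma sum_partialExpTerm [CharZero K] (a : ℕ → K) (w : ℕ) (j : Fin N) :
    ∑ p ∈ weightedIndices N w, partialExpTerm a p j =
      if j.1 < w then expCoeff N (w - (j.1 + 1)) a else 0 := by
  split_ifs with hjw
  · obtain ⟨v, rfl⟩ : ∃ v, w = v + (j.1 + 1) := ⟨w - (j.1 + 1), by omega⟩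
    rw [Nat.add_sub_cancel, sum_partialExpTerm_add]
  · refine sum_eq_zero fun p hp => ?_
    have hpj := apply_eq_zero_of_weight_lt (j := j) (by rw [mem_weightedIndices.1 hp]; omega)
    simp [partialExpTerm, hpj]

lemma sum_mul_sum_partialExpTerm [CharZero K] (a c : ℕ → K) {w : ℕ} (hw : w ≤ N) :
    ∑ j : Fin N, c j * ∑ p ∈ weightedIndices N w, partialExpTerm a p j =
      ∑ j ∈ range w, c j * expCoeff N (w - (j + 1)) a := by
  simp_rw [sum_partialExpTerm, mul_ite, mul_zero]
  rw [Fin.sum_univ_eq_sum_range (fun j => if j < w then c j * expCoeff N (w - (j + 1)) a else 0),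
    ← sum_subset (range_subset_range.2 hw) fun j _ hj => if_neg (by simpa using hj)]
  exact sum_congr rfl fun j hj => if_pos (mem_range.1 hj)

lemma expCoeff_zero (a : ℕ → K) : expCoeff N 0 a = 1 := by
  have h : weightedIndices N 0 = {0} := by
    ext p
    simp [mem_weightedIndices, weight, funext_iff]
  simp [expCoeff, h, expTerm]

lemma natCast_mul_expCoeff [CharZero K] (a : ℕ → K) {w : ℕ} (hw : w ≤ N) :
    (w : K) * expCoeff N w a = ∑ j ∈ range w, (j + 1) * a j * expCoeff N (w - (j + 1)) a := by
  have hweight : ∀ p ∈ weightedIndices N w,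
      (w : K) * expTerm a p = ∑ j : Fin N, ((j : K) + 1) * (a j * partialExpTerm a p j) := by
    intro p hp
    simp_rw [mul_partialExpTerm, ← mul_assoc, ← sum_mul, ← mem_weightedIndices.1 hp, weight]
    push_cast
    rfl
  rw [expCoeff, mul_sum, sum_congr rfl hweight, sum_comm]
  simp_rw [← mul_sum, ← mul_assoc]
  exact sum_mul_sum_partialExpTerm a (fun j => (j + 1) * a j) hw

lemma natCast_succ_mul_expCoeff_succ [CharZero K] (a : ℕ → K) {w : ℕ} (hw : w + 1 ≤ N) :
    ((w : K) + 1) * expCoeff N (w + 1) a =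
      a 0 * expCoeff N w a + ∑ j ∈ range w, (j + 2) * a (j + 1) * expCoeff N (w - (j + 1)) a := by
  have h := natCast_mul_expCoeff a hw
  rw [sum_range_succ'] at h
  push_cast at h
  rw [h, add_comm]
  congr 1
  · simp
  · exact sum_congr rfl fun j _ => by ring

end ExpCoeff

section Derivatives

variable {𝕜 : Type*} [NontriviallyNormedField 𝕜]

lemma HasDerivAt.pow_inv {u : 𝕜 → 𝕜} {u' y : 𝕜} (hu : HasDerivAt u u' y) (hy : u y ≠ 0)
    (k : ℕ) :
    HasDerivAt (fun z => (u z ^ k)⁻¹) (-(k * u' * (u y ^ (k + 1))⁻¹)) y := by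
  refine ((hu.fun_pow k).fun_inv (pow_ne_zero k hy)).congr_deriv ?_
  rcases k with _ | k
  · simp
  · simp only [Nat.add_sub_cancel]
    field_simp
    ring

lemma iteratedDeriv_inv_sub (k : ℕ) (x y : 𝕜) :
    iteratedDeriv k (fun z => (x - z)⁻¹) y = k ! * (x - y)⁻¹ ^ (k + 1) := by
  have h := congrFun (iter_deriv_inv_linear k (-1 : 𝕜) x) y
  simp only [neg_one_mul, neg_add_eq_sub] at h
  have hsign : (-1 : 𝕜) ^ k * (-1) ^ k = 1 := by rw [← mul_pow]; simp
  rw [iteratedDeriv_eq_iterate, h, show (-1 - k : ℤ) = -((k + 1 : ℕ) : ℤ) by push_cast; ring,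
    zpow_neg, zpow_natCast, inv_pow]
  linear_combination (k ! * ((x - y) ^ (k + 1))⁻¹) * hsign

lemma HasDerivAt.eq_of_sq_mul_eventuallyEq_one [CharZero 𝕜] {f Q : 𝕜 → 𝕜} {f' Q' y : 𝕜}
    (hf : HasDerivAt f f' y) (hQ : HasDerivAt Q Q' y)
    (h : ∀ᶠ z in 𝓝 y, f z ^ 2 * Q z = 1) : f' = -(f y * Q' / (2 * Q y)) := by
  have hy : f y ^ 2 * Q y = 1 := h.self_of_nhds
  have hQy : Q y ≠ 0 := right_ne_zero_of_mul_eq_one hy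
  have hfy : f y ≠ 0 := fun h0 => by simp [h0] at hy
  have hd := ((hf.fun_pow 2).fun_mul hQ).unique
    ((hasDerivAt_const y (1 : 𝕜)).congr_of_eventuallyEq h)
  norm_num at hd
  field_simp
  linear_combination (f y * Q y) * hd - (2 * f' * Q y + f y * Q') * hy

lemma hasDerivAt_expCoeff [CharZero 𝕜] {N w : ℕ} (hw : w ≤ N) {a : 𝕜 → ℕ → 𝕜} {a' : ℕ → 𝕜}
    {y : 𝕜} (ha : ∀ i, HasDerivAt (fun z => a z i) (a' i) y) :
    HasDerivAt (fun z => expCoeff N w (a z))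
      (∑ j ∈ range w, a' j * expCoeff N (w - (j + 1)) (a y)) y := by
  have hterm : ∀ p : Fin N → ℕ, HasDerivAt (fun z => expTerm (a z) p)
      (∑ j : Fin N, a' j * partialExpTerm (a y) p j) y := by
    intro p
    refine (HasDerivAt.fun_finsetProd (u := univ) (f := fun (i : Fin N) z => a z i ^ p i / (p i)!)
      fun i _ => ((ha i).fun_pow (p i)).div_const (p i)!).congr_deriv (sum_congr rfl fun j _ => ?_)
    rw [partialExpTerm, smul_eq_mul]
    ring
  rw [← sum_mul_sum_partialExpTerm (a y) a' hw]
  refine (HasDerivAt.fun_sum fun p _ => hterm p).congr_deriv ?_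
  simp_rw [mul_sum]
  exact sum_comm

lemma iteratedDeriv_eq_factorial_mul_expCoeff [CharZero 𝕜] {U : Set 𝕜} (hU : IsOpen U)
    {f : 𝕜 → 𝕜} {a : 𝕜 → ℕ → 𝕜} (hf : ∀ y ∈ U, HasDerivAt f (f y * a y 0) y)
    (ha : ∀ y ∈ U, ∀ i, HasDerivAt (fun z => a z i) ((i + 2) * a y (i + 1)) y)
    {N w : ℕ} (hw : w ≤ N) {y : 𝕜} (hy : y ∈ U) :
    iteratedDeriv w f y = w ! * f y * expCoeff N w (a y) := by
  induction w generalizing y with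
  | zero => simp [expCoeff_zero]
  | succ w ih =>
    have hev : iteratedDeriv w f =ᶠ[𝓝 y] fun z => w ! * f z * expCoeff N w (a z) :=
      Filter.eventuallyEq_of_mem (hU.mem_nhds hy) fun z hz => ih (by omega) hz
    rw [iteratedDeriv_succ, hev.deriv_eq]
    refine ((((hf y hy).const_mul _).mul (hasDerivAt_expCoeff (by omega) (ha y hy))).deriv).trans ?_
    rw [factorial_succ]
    push_cast
    linear_combination -(w ! * f y) * natCast_succ_mul_expCoeff_succ (a y) hw

lemma iteratedDeriv_div_sub_eq [CharZero 𝕜] {U : Set 𝕜} (hU : IsOpen U) {f : 𝕜 → 𝕜}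
    {a : 𝕜 → ℕ → 𝕜} (hf : ∀ y ∈ U, HasDerivAt f (f y * a y 0) y)
    (ha : ∀ y ∈ U, ∀ i, HasDerivAt (fun z => a z i) ((i + 2) * a y (i + 1)) y)
    {x y : 𝕜} (hy : y ∈ U) (hxy : x ≠ y) {n : ℕ} (hfn : ContDiffAt 𝕜 n f y) :
    iteratedDeriv n (fun z => f z / (x - z)) y =
      n ! * f y * ∑ k ∈ range (n + 1), expCoeff n k (a y) * (x - y)⁻¹ ^ (n - k + 1) := by
  have hinv : ContDiffAt 𝕜 n (fun z => (x - z)⁻¹) y :=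
    (contDiffAt_const.sub contDiffAt_id).inv (sub_ne_zero.2 hxy)
  simp_rw [div_eq_mul_inv]
  rw [iteratedDeriv_fun_mul hfn hinv, mul_sum]
  refine sum_congr rfl fun k hk => ?_
  have hkn : k ≤ n := Nat.lt_succ_iff.1 (mem_range.1 hk)
  rw [iteratedDeriv_eq_factorial_mul_expCoeff hU hf ha hkn hy, iteratedDeriv_inv_sub,
    ← Nat.choose_mul_factorial_mul_factorial hkn]
  push_cast
  ring

end Derivatives

noncomputable def sigmaCoeff (x y : ℂ) (i : ℕ) : ℂ := Sig x y (i + 1) / (2 * (i + 1))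

lemma hasDerivAt_Sig_left {x y : ℂ} (hxy : x ≠ y) (k : ℕ) :
    HasDerivAt (fun t => Sig t y k) (-(k * ((x - y) ^ (k + 1))⁻¹)) x := by
  have h := ((hasDerivAt_id' x).sub_const y).pow_inv (sub_ne_zero.2 hxy) k
  exact (h.const_add (((-y) ^ k)⁻¹ + ((1 - y) ^ k)⁻¹)).congr_deriv (by ring)

lemma hasDerivAt_Sig_right {x y : ℂ} (hy0 : y ≠ 0) (hy1 : y ≠ 1) (hyx : y ≠ x) (k : ℕ) :
    HasDerivAt (fun z => Sig x z k) (k * Sig x y (k + 1)) y := by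
  have hsub : ∀ c : ℂ, y ≠ c →
      HasDerivAt (fun z => ((c - z) ^ k)⁻¹) (k * ((c - y) ^ (k + 1))⁻¹) y :=
    fun c hc => by simpa using ((hasDerivAt_id y).const_sub c).pow_inv (sub_ne_zero.2 hc.symm) k
  have h := ((hsub 0 hy0).fun_add (hsub 1 hy1)).fun_add (hsub x hyx)
  simp only [zero_sub] at h
  exact h.congr_deriv (by simp only [Sig]; ring)

lemma hasDerivAt_sigmaCoeff_left {x y : ℂ} (hxy : x ≠ y) (i : ℕ) :
    HasDerivAt (fun t => sigmaCoeff t y i) (-((x - y)⁻¹ ^ (i + 2) / 2)) x := by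
  refine ((hasDerivAt_Sig_left hxy (i + 1)).div_const _).congr_deriv ?_
  have : x - y ≠ 0 := sub_ne_zero.2 hxy
  have : (i : ℂ) + 1 ≠ 0 := Nat.cast_add_one_ne_zero i
  rw [inv_pow]
  push_cast
  field_simp

lemma hasDerivAt_sigmaCoeff_right {x y : ℂ} (hy0 : y ≠ 0) (hy1 : y ≠ 1) (hyx : y ≠ x) (i : ℕ) :
    HasDerivAt (fun z => sigmaCoeff x z i) ((i + 2) * sigmaCoeff x y (i + 1)) y := by
  refine ((hasDerivAt_Sig_right hy0 hy1 hyx (i + 1)).div_const _).congr_deriv ?_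
  have : (i : ℂ) + 1 ≠ 0 := Nat.cast_add_one_ne_zero i
  have : (i : ℂ) + 1 + 1 ≠ 0 := by exact_mod_cast Nat.succ_ne_zero (i + 1)
  simp only [sigmaCoeff]
  push_cast
  field_simp
  ring

lemma hasDerivAt_branch {x : ℂ} {U : Set ℂ} (hU : IsOpen U)
    (hUavoid : ∀ z ∈ U, z ≠ 0 ∧ z ≠ 1 ∧ z ≠ x) {f : ℂ → ℂ} (hf : DifferentiableOn ℂ f U)
    (hbranch : ∀ z ∈ U, f z ^ 2 * (z * (z - 1) * (z - x)) = 1) {y : ℂ} (hy : y ∈ U) :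
    HasDerivAt f (f y * sigmaCoeff x y 0) y := by
  obtain ⟨hy0, hy1, hyx⟩ := hUavoid y hy
  have hfd := (hf.differentiableAt (hU.mem_nhds hy)).hasDerivAt
  have hQ : HasDerivAt (fun z => z * (z - 1) * (z - x))
      ((y - 1) * (y - x) + y * (y - x) + y * (y - 1)) y :=
    (((hasDerivAt_id' y).fun_mul ((hasDerivAt_id' y).sub_const 1)).fun_mul
      ((hasDerivAt_id' y).sub_const x)).congr_deriv (by ring)
  have hderiv := hfd.eq_of_sq_mul_eventuallyEq_one hQ
    (Filter.eventually_of_mem (hU.mem_nhds hy) hbranch)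
  refine hfd.congr_deriv ?_
  have : y - 1 ≠ 0 := sub_ne_zero.2 hy1
  have : y - x ≠ 0 := sub_ne_zero.2 hyx
  have : 1 - y ≠ 0 := sub_ne_zero.2 hy1.symm
  have : x - y ≠ 0 := sub_ne_zero.2 hyx.symm
  have : -y ≠ 0 := neg_ne_zero.2 hy0
  rw [hderiv, sigmaCoeff, Sig]
  field_simp
  ring

lemma Lsum_eq_factorial_mul_expCoeff (x y : ℂ) (n : ℕ) :
    Lsum x y n = n ! * expCoeff n n (sigmaCoeff x y) := by
  rw [Lsum, expCoeff, mul_sum]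
  refine sum_congr rfl fun p _ => ?_
  simp only [expTerm, sigmaCoeff, div_pow, mul_pow, prod_div_distrib, prod_mul_distrib,
    prod_pow_eq_pow_sum]
  field_simp

lemma Lsum_div_sub_sub_two_mul_deriv {x y : ℂ} (hxy : x ≠ y) (n : ℕ) :
    Lsum x y n / (x - y) - 2 * deriv (fun t => Lsum t y n) x =
      n ! * ∑ k ∈ range (n + 1), expCoeff n k (sigmaCoeff x y) * (x - y)⁻¹ ^ (n - k + 1) := by
  have hd := (hasDerivAt_expCoeff (le_refl n) (a := fun t => sigmaCoeff t y)
    fun i => hasDerivAt_sigmaCoeff_left hxy i).const_mul (n ! : ℂ)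
  set T := (x - y)⁻¹
  set a := sigmaCoeff x y
  have hreflect : ∑ k ∈ range n, expCoeff n k a * T ^ (n - k + 1) =
      -2 * ∑ j ∈ range n, -(T ^ (j + 2) / 2) * expCoeff n (n - (j + 1)) a := by
    rw [← sum_range_reflect, mul_sum]
    refine sum_congr rfl fun j hj => ?_
    rw [show n - 1 - j = n - (j + 1) by omega,
      show n - (n - (j + 1)) + 1 = j + 2 by have := mem_range.1 hj; omega]
    ring
  simp_rw [Lsum_eq_factorial_mul_expCoeff]
  rw [hd.deriv, sum_range_succ, hreflect, Nat.sub_self, div_eq_mul_inv]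
  ring

theorem stmt5_general (x : ℂ)
    (U : Set ℂ) (hU : IsOpen U)
    (hUavoid : ∀ z ∈ U, z ≠ 0 ∧ z ≠ 1 ∧ z ≠ x)
    (f : ℂ → ℂ) (hf : DifferentiableOn ℂ f U)
    (hbranch : ∀ z ∈ U, (f z) ^ 2 * (z * (z - 1) * (z - x)) = 1)
    (y0 : ℂ) (hy : y0 ∈ U) (n : ℕ) :
    (1 / f y0) * iteratedDeriv n (fun y => f y / (x - y)) y0 =
      Lsum x y0 n / (x - y0) - 2 * deriv (fun t => Lsum t y0 n) x := by
  have hxy : x ≠ y0 := ((hUavoid y0 hy).2.2).symm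
  have hf0 : f y0 ≠ 0 := fun h0 => by simpa [h0] using hbranch y0 hy
  have hleft := iteratedDeriv_div_sub_eq (n := n) hU
    (fun y hy => hasDerivAt_branch hU hUavoid hf hbranch hy)
    (fun y hy => hasDerivAt_sigmaCoeff_right (hUavoid y hy).1 (hUavoid y hy).2.1 (hUavoid y hy).2.2)
    hy hxy ((hf.contDiffOn hU).contDiffAt (hU.mem_nhds hy))
  rw [hleft, Lsum_div_sub_sub_two_mul_deriv hxy]
  field_simp

/-- Lemma 4.2 (middle identity): for `n ≥ 1`,
`(1/f) ∂_{y₀}ⁿ (f/(x-y₀)) = L_n/(x-y₀) - 2 ∂_x L_n`, where `f` is a holomorphic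
branch of `(y(y-1)(y-x))^{-1/2}` and the `x`-derivative is taken with `y₀` fixed. -/
theorem stmt5 (x : ℂ) (hx0 : x ≠ 0) (hx1 : x ≠ 1)
    (U : Set ℂ) (hU : IsOpen U)
    (hUavoid : ∀ z ∈ U, z ≠ 0 ∧ z ≠ 1 ∧ z ≠ x)
    (f : ℂ → ℂ) (hf : DifferentiableOn ℂ f U)
    (hbranch : ∀ z ∈ U, (f z) ^ 2 * (z * (z - 1) * (z - x)) = 1)
    (y0 : ℂ) (hy : y0 ∈ U) (n : ℕ) (hn : 1 ≤ n) :
    (1 / f y0) * iteratedDeriv n (fun y => f y / (x - y)) y0 =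
      Lsum x y0 n / (x - y0) - 2 * deriv (fun t => Lsum t y0 n) x :=
  stmt5_general x U hU hUavoid f hf hbranch y0 hy n
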